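/- arXiv:0911.1412 — 2 statements merged into one kernel-verified Lean document; each statement's English description precedes it below -/
import Mathlib

section
/- Let S be an abstract pure Hilbert system and let r be a rule over the formulas of S. Then r is derivable in S if and only if r is admissible in every extension of S, i.e. in every APHS S' over the same formulas whose axioms include the axioms of S and whose rules include the rules of S. -/
universe u

/-- An instance of a rule: a finite list of premise formulas and a conclusion formula. -/
abbrev Inst (F : Type u) := List F × F

/-- A rule over formulas `F`: a set of instances. -/
abbrev Rule (F : Type u) := Set (Inst F)

/-- An abstract pure Hilbert system over formulas `F`:
a set of axioms and a set of rules. -/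
structure APHS (F : Type u) where
  axioms : Set F
  rules : Set (Rule F)

/-- The consequence relation `Γ ⊢_S A` of an APHS `S`, defined inductively. -/
inductive APHS.Deriv {F : Type u} (S : APHS F) : Set F → F → Prop
  | assum {Γ : Set F} {A : F} : A ∈ Γ → APHS.Deriv S Γ A
  | ax {Γ : Set F} {A : F} : A ∈ S.axioms → APHS.Deriv S Γ A
  | rule {Γ : Set F} {r : Rule F} {i : Inst F} :
      r ∈ S.rules → i ∈ r → (∀ B ∈ i.1, APHS.Deriv S Γ B) →
      APHS.Deriv S Γ i.2

/-- A formula is a theorem of `S` if it is derivable without assumptions. -/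
def APHS.Theorem {F : Type u} (S : APHS F) (A : F) : Prop :=
  S.Deriv ∅ A

/-- `S.add r` is the APHS `S + r` obtained from `S` by adding the rule `r`. -/
def APHS.add {F : Type u} (S : APHS F) (r : Rule F) : APHS F :=
  ⟨S.axioms, insert r S.rules⟩

/-- A rule `r` is admissible in `S` if `S + r` has the same theorems as `S`. -/
def APHS.Admissible {F : Type u} (S : APHS F) (r : Rule F) : Prop :=
  ∀ A : F, (S.add r).Theorem A ↔ S.Theorem A

/-- A rule `r` is correct for `S` if for every instance of `r` whose premises are
all theorems of `S`, the conclusion is a theorem of `S`. -/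
def APHS.Correct {F : Type u} (S : APHS F) (r : Rule F) : Prop :=
  ∀ i ∈ r, (∀ B ∈ i.1, S.Theorem B) → S.Theorem i.2

/-- A rule `r` is derivable in `S` if for every instance `(⟨A₁,…,Aₙ⟩, A)` of `r`
one has `{A₁,…,Aₙ} ⊢_S A`. -/
def APHS.Derivable {F : Type u} (S : APHS F) (r : Rule F) : Prop :=
  ∀ i ∈ r, S.Deriv {B | B ∈ i.1} i.2


/-- Cut: replace assumptions by derivations. -/
theorem APHS.Deriv.cut {F : Type u} {S : APHS F} {Γ Δ : Set F} {A : F}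
    (h : S.Deriv Γ A) (hΓ : ∀ B ∈ Γ, S.Deriv Δ B) : S.Deriv Δ A := by
  induction h with
  | assum hA => exact hΓ _ hA
  | ax hA => exact APHS.Deriv.ax hA
  | rule hr hi _ ih => exact APHS.Deriv.rule hr hi ih

/-- Monotonicity in the system. -/
theorem APHS.Deriv.mono {F : Type u} {S S' : APHS F} {Γ : Set F} {A : F}
    (hax : S.axioms ⊆ S'.axioms) (hru : S.rules ⊆ S'.rules)
    (h : S.Deriv Γ A) : S'.Deriv Γ A := by
  induction h with
  | assum hA => exact APHS.Deriv.assum hA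
  | ax hA => exact APHS.Deriv.ax (hax hA)
  | rule hr hi _ ih => exact APHS.Deriv.rule (hru hr) hi ih

/-- If `r` is derivable in `S`, derivations in `S + r` reduce to `S`. -/
theorem APHS.Deriv.elim {F : Type u} {S : APHS F} {r : Rule F} {Γ : Set F} {A : F}
    (hd : S.Derivable r) (h : (S.add r).Deriv Γ A) : S.Deriv Γ A := by
  induction h with
  | assum hA => exact APHS.Deriv.assum hA
  | ax hA => exact APHS.Deriv.ax hA
  | rule hr hi _ ih =>
    rcases hr with rfl | hr
    · exact (hd _ hi).cut (fun B hB => ih B hB)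
    · exact APHS.Deriv.rule hr hi ih

/-- a rule is derivable in `S` iff it is admissible in every
extension of `S` (over the same formulas, with more axioms and/or rules). -/
theorem derivable_iff_admissible_in_all_extensions {F : Type u} [Nonempty F]
    (S : APHS F) (r : Rule F) :
    S.Derivable r ↔
      ∀ S' : APHS F, S.axioms ⊆ S'.axioms → S.rules ⊆ S'.rules →
        S'.Admissible r := by
  constructor
  · intro hd S' hax hru A
    constructor
    · intro h
      exact APHS.Deriv.elim
        (fun i hi => (hd i hi).mono hax hru) h
    · intro h
      exact h.mono (S := S') (by exact subset_rfl) (Set.subset_insert _ _)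
  · intro h i hi
    set S' : APHS F := ⟨S.axioms ∪ {B | B ∈ i.1}, S.rules⟩ with hS'
    have hadm := h S' Set.subset_union_left subset_rfl
    have hthm : (S'.add r).Theorem i.2 := by
      refine APHS.Deriv.rule (Set.mem_insert _ _) hi ?_
      intro B hB
      exact APHS.Deriv.ax (Or.inr hB)
    have h2 : S'.Deriv ∅ i.2 := (hadm i.2).mp hthm
    -- convert S'-derivation to S-derivation with premises as assumptions
    have key : ∀ Γ A, S'.Deriv Γ A → S.Deriv (Γ ∪ {B | B ∈ i.1}) A := by
      intro Γ A hA
      induction hA with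
      | assum hA => exact APHS.Deriv.assum (Or.inl hA)
      | ax hA =>
        rcases hA with hA | hA
        · exact APHS.Deriv.ax hA
        · exact APHS.Deriv.assum (Or.inr hA)
      | rule hr hi _ ih => exact APHS.Deriv.rule hr hi ih
    have := key _ _ h2
    simpa using this
end

section
/- Let S be an abstract pure Hilbert system and let r be a rule over the formulas of S. Consider derivation trees of S + r (finite trees whose leaves are assumptions or axioms and whose inner nodes are applications of instances of rules of S + r), and the one-step mimicking rewrite relation on such trees: D → D' holds when D' is obtained from D by replacing one subtree ending in an application of an instance (⟨A₁,…,Aₙ⟩, A) of r (with immediate subderivations D₁,…,Dₙ of A₁,…,Aₙ) by a derivation tree of S with conclusion A whose assumptions are among {A₁,…,Aₙ}, grafting D₁,…,Dₙ onto those assumption leaves. Then this rewrite relation is strongly normalising (the reversed relation is well-founded), and if r is derivable in S then every normal form is a derivation tree containing no application of r, i.e. a derivation tree of S. -/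
universe u

/-- Derivation trees for the system `S + r`: a leaf (an assumption, or an axiom
if its label is an axiom), or a node formed by an application of a rule instance,
with immediate subtrees.  The Boolean tag records whether the node is an
application of the added rule `r` (`true`) or of a rule of `S` (`false`). -/
inductive DTree (F : Type u) where
  | leaf (A : F) : DTree F
  | node (isR : Bool) (i : Inst F) (subs : List (DTree F)) : DTree F

/-- The conclusion of a derivation tree. -/
def DTree.concl {F : Type u} : DTree F → F
  | .leaf A => A
  | .node _ i _ => i.2

/-- `ExtDeriv S r D` means `D` is a derivation tree of `S + r`:
nodes tagged `false` apply instances of rules of `S`, nodes tagged `true` apply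
instances of the added rule `r`; premises of each applied instance are the
conclusions of the immediate subtrees. -/
inductive ExtDeriv {F : Type u} (S : APHS F) (r : Rule F) : DTree F → Prop
  | leaf (A : F) : ExtDeriv S r (.leaf A)
  | nodeS {q : Rule F} {i : Inst F} {subs : List (DTree F)} :
      q ∈ S.rules → i ∈ q → subs.map DTree.concl = i.1 →
      (∀ t ∈ subs, ExtDeriv S r t) →
      ExtDeriv S r (.node false i subs)
  | nodeR {i : Inst F} {subs : List (DTree F)} :
      i ∈ r → subs.map DTree.concl = i.1 →
      (∀ t ∈ subs, ExtDeriv S r t) →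
      ExtDeriv S r (.node true i subs)

/-- A derivation tree contains no application of the added rule `r`. -/
inductive RFree {F : Type u} : DTree F → Prop
  | leaf (A : F) : RFree (.leaf A)
  | node {i : Inst F} {subs : List (DTree F)} :
      (∀ t ∈ subs, RFree t) → RFree (.node false i subs)

/-- `DTree.IsAssm Ax A D` holds if `A` occurs as an assumption of `D`,
i.e. as the label of a leaf of `D` that is not an axiom from `Ax`. -/
inductive DTree.IsAssm {F : Type u} (Ax : Set F) : F → DTree F → Prop
  | leaf {A : F} : A ∉ Ax → DTree.IsAssm Ax A (.leaf A)
  | node {A : F} {b : Bool} {i : Inst F} {subs : List (DTree F)} {t : DTree F} :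
      t ∈ subs → DTree.IsAssm Ax A t → DTree.IsAssm Ax A (.node b i subs)

/-- `Graft Ax subs D E`: `E` is obtained from the tree `D` by grafting, at each
of its assumption leaves, some tree from `subs` whose conclusion is the label of
that leaf (axiom leaves may be kept). -/
inductive Graft {F : Type u} (Ax : Set F) (subs : List (DTree F)) :
    DTree F → DTree F → Prop
  | leafAx {A : F} : A ∈ Ax → Graft Ax subs (.leaf A) (.leaf A)
  | leafAssm {A : F} {t : DTree F} :
      t ∈ subs → DTree.concl t = A → Graft Ax subs (.leaf A) t
  | node {b : Bool} {i : Inst F} {ts ts' : List (DTree F)} :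
      (hlen : ts.length = ts'.length) →
      (∀ (k : ℕ) (h : k < ts.length) (h' : k < ts'.length),
        Graft Ax subs (ts.get ⟨k, h⟩) (ts'.get ⟨k, h'⟩)) →
      Graft Ax subs (.node b i ts) (.node b i ts')

/-- The one-step mimicking rewrite relation on derivation trees of `S + r`:
a subtree ending in an application of an instance `(⟨A₁,…,Aₙ⟩, A)` of `r` with
immediate subderivations `D₁,…,Dₙ` is replaced by a derivation tree of `S` with
conclusion `A` and assumptions among `{A₁,…,Aₙ}`, onto whose assumption leaves
the `Dᵢ` are grafted. -/
inductive Step {F : Type u} (S : APHS F) (r : Rule F) : DTree F → DTree F → Prop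
  | root {i : Inst F} {subs : List (DTree F)} {D' E : DTree F} :
      i ∈ r → subs.map DTree.concl = i.1 →
      ExtDeriv S r D' → RFree D' → D'.concl = i.2 →
      (∀ A : F, DTree.IsAssm S.axioms A D' → A ∈ i.1) →
      Graft S.axioms subs D' E →
      Step S r (.node true i subs) E
  | congr {b : Bool} {i : Inst F} {pre post : List (DTree F)} {t t' : DTree F} :
      Step S r t t' →
      Step S r (.node b i (pre ++ t :: post)) (.node b i (pre ++ t' :: post))

/-!
A mimicking step at an `r`-node replaces it by an `r`-free skeleton with the node's immediate
subderivations grafted onto the skeleton's assumption leaves. So strong normalisation goes by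
structural induction on trees: if all immediate subtrees of a node are strongly normalising, a
reduct of the node either reduces one of them (and lists of strongly normalising trees are
accessible for one-entry steps), or is such a graft, which is strongly normalising by induction
on the skeleton, whose nodes are never rewritten at the root. If `r` is derivable, every instance
of `r` has an `S`-derivation from its premises, giving a mimicking step at every `r`-node, so a
normal form has none.
-/

namespace List

variable {α β : Type*}

theorem exists_forall₂_of_forall_exists {R : α → β → Prop} :
    ∀ {l : List α}, (∀ a ∈ l, ∃ b, R a b) → ∃ l' : List β, Forall₂ R l l'
  | [], _ => ⟨[], .nil⟩
  | a :: l, h => by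
    obtain ⟨b, hb⟩ := h a mem_cons_self
    obtain ⟨l', hl'⟩ := exists_forall₂_of_forall_exists fun x hx => h x (mem_cons_of_mem a hx)
    exact ⟨b :: l', .cons hb hl'⟩

inductive OneStep (R : α → α → Prop) : List α → List α → Prop
  | head {a a' : α} {l : List α} : R a a' → OneStep R (a :: l) (a' :: l)
  | tail {a : α} {l l' : List α} : OneStep R l l' → OneStep R (a :: l) (a :: l')

namespace OneStep

variable {R : α → α → Prop}

theorem append_cons {a a' : α} (h : R a a') :
    ∀ pre post : List α, OneStep R (pre ++ a :: post) (pre ++ a' :: post)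
  | [], _ => head h
  | _ :: pre, post => tail (append_cons h pre post)

theorem forall_acc {l l' : List α} (h : OneStep R l l')
    (hl : ∀ a ∈ l, Acc (flip R) a) : ∀ a ∈ l', Acc (flip R) a := by
  induction h with
  | head hs =>
    simp only [mem_cons, forall_eq_or_imp] at hl ⊢
    exact ⟨hl.1.inv hs, hl.2⟩
  | tail _ ih =>
    simp only [mem_cons, forall_eq_or_imp] at hl ⊢
    exact ⟨hl.1, ih hl.2⟩

theorem acc_cons {a : α} (ha : Acc (flip R) a) {l : List α} (hl : Acc (flip (OneStep R)) l) :
    Acc (flip (OneStep R)) (a :: l) := by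
  induction ha generalizing l with
  | intro a _ iha =>
    induction hl with
    | intro l hl ihl =>
      refine Acc.intro _ fun l' h => ?_
      cases h with
      | head hs => exact iha _ hs (Acc.intro l hl)
      | tail hs => exact ihl _ hs

theorem acc : ∀ {l : List α}, (∀ a ∈ l, Acc (flip R) a) → Acc (flip (OneStep R)) l
  | [], _ => Acc.intro _ fun _ h => nomatch h
  | a :: l, h => by
    simp only [mem_cons, forall_eq_or_imp] at h
    exact acc_cons h.1 (acc h.2)

end OneStep

end List

namespace DTree

variable {F : Type u}

@[elab_as_elim]
theorem induction {motive : DTree F → Prop} (leaf : ∀ A, motive (.leaf A))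
    (node : ∀ b i l, (∀ t ∈ l, motive t) → motive (.node b i l)) : ∀ D, motive D
  | .leaf A => leaf A
  | .node b i l => node b i l fun t _ => induction leaf node t

theorem exists_graft (Ax : Set F) (subs : List (DTree F)) (D : DTree F)
    (h : ∀ A, D.IsAssm Ax A → ∃ t ∈ subs, t.concl = A) : ∃ E, Graft Ax subs D E := by
  induction D using DTree.induction with
  | leaf A =>
    by_cases hA : A ∈ Ax
    · exact ⟨_, .leafAx hA⟩
    · obtain ⟨t, ht, rfl⟩ := h A (.leaf hA)
      exact ⟨t, .leafAssm ht rfl⟩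
  | node b i ts ih =>
    obtain ⟨ts', hts'⟩ := List.exists_forall₂_of_forall_exists fun t ht =>
      ih t ht fun A hA => h A (.node ht hA)
    obtain ⟨hlen, hget⟩ := List.forall₂_iff_get.1 hts'
    exact ⟨_, .node hlen hget⟩

end DTree

variable {F : Type u} {S : APHS F} {r : Rule F}

theorem acc_node {b : Bool} {i : Inst F}
    (hroot : ∀ {l : List (DTree F)} {D E : DTree F}, (∀ t ∈ l, Acc (flip (Step S r)) t) →
      b = true → RFree D → Graft S.axioms l D E → Acc (flip (Step S r)) E)
    {l : List (DTree F)} (hl : ∀ t ∈ l, Acc (flip (Step S r)) t) :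
    Acc (flip (Step S r)) (.node b i l) := by
  induction List.OneStep.acc hl with
  | intro l _ ih =>
    refine Acc.intro _ fun E hE => ?_
    cases hE with
    | root _ _ _ hD _ _ hg => exact hroot hl rfl hD hg
    | @congr _ _ pre post _ _ hs =>
      have hstep := List.OneStep.append_cons hs pre post
      exact ih _ hstep (hstep.forall_acc hl)

theorem acc_of_graft {subs : List (DTree F)} {D E : DTree F} (hg : Graft S.axioms subs D E)
    (hD : RFree D) (hsubs : ∀ t ∈ subs, Acc (flip (Step S r)) t) :
    Acc (flip (Step S r)) E := by
  induction hg with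
  | leafAx => exact Acc.intro _ fun _ h => nomatch h
  | leafAssm ht => exact hsubs _ ht
  | node hlen hget ih =>
    cases hD with
    | node hts =>
      refine acc_node (b := false) (fun _ h => nomatch h) fun t ht => ?_
      obtain ⟨⟨k, hk⟩, rfl⟩ := List.mem_iff_get.1 ht
      exact ih k (hlen ▸ hk) hk (hts _ (List.get_mem _ _))

theorem acc_step (D : DTree F) : Acc (flip (Step S r)) D := by
  induction D using DTree.induction with
  | leaf => exact Acc.intro _ fun _ h => nomatch h
  | node _ _ _ ih => exact acc_node (fun hl _ hD hg => acc_of_graft hg hD hl) ih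

theorem APHS.Deriv.exists_rFree {Γ : Set F} {A : F} (h : S.Deriv Γ A) :
    ∃ D : DTree F, ExtDeriv S r D ∧ RFree D ∧ D.concl = A ∧
      ∀ B, D.IsAssm S.axioms B → B ∈ Γ := by
  induction h with
  | assum hA => exact ⟨.leaf _, .leaf _, .leaf _, rfl, fun _ hB => by cases hB; exact hA⟩
  | ax hA => exact ⟨.leaf _, .leaf _, .leaf _, rfl, fun _ hB => by cases hB; contradiction⟩
  | @rule q i hq hi _ ih =>
    obtain ⟨ts, hts⟩ := List.exists_forall₂_of_forall_exists ih
    have hts' : ts.Forall₂ (fun t B => (ExtDeriv S r t ∧ RFree t ∧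
        ∀ C, t.IsAssm S.axioms C → C ∈ Γ) ∧ t.concl = B) i.1 :=
      List.Forall₂.flip (hts.imp fun _ _ ⟨h₁, h₂, h₃, h₄⟩ => ⟨⟨h₁, h₂, h₄⟩, h₃⟩)
    obtain ⟨hsub, hmap⟩ := (List.forall₂_and_left _ _).1 hts'
    rw [← List.forall₂_map_left_iff (f := DTree.concl), List.forall₂_eq_eq_eq] at hmap
    refine ⟨.node false i ts, .nodeS hq hi hmap fun t ht => (hsub t ht).1,
      .node fun t ht => (hsub t ht).2.1, rfl, fun B hB => ?_⟩
    cases hB with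
    | node ht hB => exact (hsub _ ht).2.2 B hB

theorem exists_step_of_derivable (hder : S.Derivable r) {i : Inst F} (hi : i ∈ r)
    {subs : List (DTree F)} (hsubs : subs.map DTree.concl = i.1) :
    ∃ E, Step S r (.node true i subs) E := by
  obtain ⟨D, hD, hDfree, hconcl, hassm⟩ := (hder i hi).exists_rFree (r := r)
  obtain ⟨E, hE⟩ := DTree.exists_graft S.axioms subs D fun A hA => by
    simpa [← hsubs] using hassm A hA
  exact ⟨E, .root hi hsubs hD hDfree hconcl hassm hE⟩

theorem rFree_of_normal (hder : S.Derivable r) {D : DTree F} (hD : ExtDeriv S r D)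
    (hnf : ∀ E, ¬ Step S r D E) : RFree D := by
  induction hD with
  | leaf A => exact .leaf A
  | nodeS _ _ _ _ ih =>
    refine .node fun t ht => ih t ht fun t' hs => ?_
    obtain ⟨pre, post, rfl⟩ := List.append_of_mem ht
    exact hnf _ (.congr hs)
  | nodeR hi hsubs =>
    obtain ⟨E, hE⟩ := exists_step_of_derivable hder hi hsubs
    exact absurd hE (hnf E)

theorem mimicking_SN_and_normal_forms_are_S_derivations_general
    {F : Type u} (S : APHS F) (r : Rule F) :
    WellFounded (fun D' D : {D : DTree F // ExtDeriv S r D} =>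
        Step S r D.1 D'.1) ∧
    (S.Derivable r →
      ∀ D : DTree F, ExtDeriv S r D → (∀ D' : DTree F, ¬ Step S r D D') →
        RFree D) :=
  ⟨InvImage.wf Subtype.val ⟨acc_step⟩, fun hder _ => rFree_of_normal hder⟩

/-- the one-step mimicking rewrite relation on derivation trees of
`S + r` is strongly normalising (its converse is well-founded), and if `r` is
derivable in `S`, then every normal form is a derivation tree containing no
application of `r`, i.e. a derivation tree of `S`. -/
theorem mimicking_SN_and_normal_forms_are_S_derivations
    {F : Type u} [Nonempty F] (S : APHS F) (r : Rule F) :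
    WellFounded (fun D' D : {D : DTree F // ExtDeriv S r D} =>
        Step S r D.1 D'.1) ∧
    (S.Derivable r →
      ∀ D : DTree F, ExtDeriv S r D → (∀ D' : DTree F, ¬ Step S r D D') →
        RFree D) :=
  mimicking_SN_and_normal_forms_are_S_derivations_general S r
end
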